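/- Let $p_1, \ldots, p_k$ be distinct primes, $s_i \geq 1$, and $f_i \in \mathbb{Z}[x]$ monic of degree $n$ for each $i$. Then the product ideal $\prod_{i=1}^k (p_i^{s_i}, f_i(x))$ in $\mathbb{Z}[x]$ equals $(m, f(x))$, where $m = \prod_i p_i^{s_i}$ and $f \in \mathbb{Z}[x]$ is any monic polynomial of degree $n$ with $f \equiv f_i \pmod{p_i^{s_i}}$ for each $i$. -/

import Mathlib

/-!
Since `f ≡ fᵢ (mod pᵢ^sᵢ)`, each factor is `(pᵢ^sᵢ) + (f)`. For an ideal `K` and coprime ideals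
`I, J` one has `(I + K)(J + K) = IJ + K`, because `K = (I + J)K ⊆ (I + K)(J + K)`; by induction the
product of the factors is `(∏ pᵢ^sᵢ) + (f) = (m, f)`.
-/

open Function Polynomial

namespace Ideal

variable {R : Type*} [CommRing R]

theorem sup_mul_sup_eq_mul_sup_of_isCoprime {I J K : Ideal R} (h : IsCoprime I J) :
    (I ⊔ K) * (J ⊔ K) = I * J ⊔ K := by
  refine le_antisymm ?_ (sup_le (mul_mono le_sup_left le_sup_left) ?_)
  · rw [sup_mul, mul_sup, mul_sup]
    exact sup_le (sup_le le_sup_left (mul_le_right.trans le_sup_right))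
      (sup_le (mul_le_left.trans le_sup_right) (mul_le_left.trans le_sup_right))
  · calc K = (I ⊔ J) * K := by rw [h.sup_eq, top_mul]
      _ = I * K ⊔ K * J := by rw [sup_mul, mul_comm J]
      _ ≤ (I ⊔ K) * (J ⊔ K) :=
        sup_le (mul_mono le_sup_left le_sup_right) (mul_mono le_sup_right le_sup_left)

theorem prod_sup_eq_prod_sup_of_pairwise_isCoprime {ι : Type*} (t : Finset ι) {I : ι → Ideal R}
    (hI : (t : Set ι).Pairwise (IsCoprime on I)) (K : Ideal R) :
    ∏ i ∈ t, (I i ⊔ K) = (∏ i ∈ t, I i) ⊔ K := by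
  classical
  induction t using Finset.induction_on with
  | empty => simp
  | insert i t hi ih =>
    rw [Finset.coe_insert, Set.pairwise_insert] at hI
    rw [Finset.prod_insert hi, Finset.prod_insert hi, ih hI.1,
      sup_mul_sup_eq_mul_sup_of_isCoprime (IsCoprime.prod_right fun j hj => (hI.2 j hj ?_).1)]
    rintro rfl
    exact hi hj

theorem span_pair_eq_of_sub_mem {a x y : R} (h : x - y ∈ span {a}) :
    span {a, x} = span {a, y} := by
  obtain ⟨c, hc⟩ := mem_span_singleton'.mp h
  rw [show x = y + c * a by rw [hc]; ring, span_pair_add_mul_left]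

end Ideal

theorem stmt_16_general (k : ℕ) (p : Fin k → ℕ) (hp : ∀ i, (p i).Prime)
    (hdist : Function.Injective p) (s : Fin k → ℕ)
    (m : ℕ) (hm : m = ∏ i : Fin k, p i ^ s i)
    (fi : Fin k → Polynomial ℤ)
    (f : Polynomial ℤ)
    (hcong : ∀ i, f - fi i ∈ Ideal.span {Polynomial.C ((p i : ℤ) ^ s i)}) :
    ∏ i : Fin k, Ideal.span {Polynomial.C ((p i : ℤ) ^ s i), fi i} =
      Ideal.span {Polynomial.C (m : ℤ), f} := by
  have hcoprime : Pairwise (IsCoprime on fun i => Ideal.span {C ((p i : ℤ) ^ s i)}) :=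
    fun i j hij => (Ideal.isCoprime_span_singleton_iff _ _).mpr <|
      (Nat.isCoprime_iff_coprime.mpr <|
        (Nat.coprime_primes (hp i) (hp j)).mpr (hdist.ne hij)).pow.map C
  calc ∏ i, Ideal.span {C ((p i : ℤ) ^ s i), fi i}
      = ∏ i, (Ideal.span {C ((p i : ℤ) ^ s i)} ⊔ Ideal.span {f}) := by
        refine Finset.prod_congr rfl fun i _ => ?_
        rw [← Ideal.span_insert,
          Ideal.span_pair_eq_of_sub_mem (neg_sub f (fi i) ▸ neg_mem (hcong i))]
    _ = Ideal.span {C (m : ℤ), f} := by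
        rw [Ideal.prod_sup_eq_prod_sup_of_pairwise_isCoprime _ (hcoprime.set_pairwise _),
          Ideal.prod_span_singleton, ← map_prod, Ideal.span_insert, hm]
        push_cast
        rfl

theorem stmt_16 (k : ℕ) (hk : 0 < k) (p : Fin k → ℕ) (hp : ∀ i, (p i).Prime)
    (hdist : Function.Injective p) (s : Fin k → ℕ) (hs : ∀ i, 1 ≤ s i)
    (n : ℕ) (hn : 0 < n) (m : ℕ) (hm : m = ∏ i : Fin k, p i ^ s i)
    (fi : Fin k → Polynomial ℤ) (hfi : ∀ i, (fi i).Monic ∧ (fi i).natDegree = n)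
    (f : Polynomial ℤ) (hf : f.Monic) (hdeg : f.natDegree = n)
    (hcong : ∀ i, f - fi i ∈ Ideal.span {Polynomial.C ((p i : ℤ) ^ s i)}) :
    ∏ i : Fin k, Ideal.span {Polynomial.C ((p i : ℤ) ^ s i), fi i} =
      Ideal.span {Polynomial.C (m : ℤ), f} :=
  stmt_16_general k p hp hdist s m hm fi f hcong
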